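/- Let A be an entrywise-nonnegative d×d real matrix with ρ := ρ(A) > 0. Call indices i, j strongly connected if each is reachable from the other; the SCC of i is the set of indices strongly connected to i. Call an index i dominant if the spectral radius of the square submatrix of A obtained by restricting rows and columns to the SCC of i equals ρ, and call a dominant index i initial if every dominant index j from which i is reachable belongs to the SCC of i. If v ∈ ℝ^d is entrywise nonnegative and satisfies A v = ρ v, then for every index j with v_j ≠ 0 there exists an initial dominant index i that is reachable from j. -/

import Mathlib

open Matrix

/-- The spectral radius of a real square matrix: the maximum of `|μ|` over the complex
eigenvalues `μ` (roots of the characteristic polynomial over `ℂ`). -/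
noncomputable def specRad {n : Type*} [Fintype n] [DecidableEq n] (M : Matrix n n ℝ) : ℝ :=
  sSup {r : ℝ | ∃ μ : ℂ, (M.map Complex.ofReal).charpoly.IsRoot μ ∧ r = ‖μ‖}

/-- `t` is reachable from `s` in the directed graph of the nonnegative matrix `A`
(edges where the entry is positive). -/
def Reach {d : ℕ} (A : Matrix (Fin d) (Fin d) ℝ) (s t : Fin d) : Prop :=
  Relation.ReflTransGen (fun p q => 0 < A p q) s t

/-- `i` and `j` are strongly connected: each is reachable from the other. -/
def SameSCC {d : ℕ} (A : Matrix (Fin d) (Fin d) ℝ) (i j : Fin d) : Prop :=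
  Reach A i j ∧ Reach A j i

open Classical in
/-- `i` is a dominant index: the spectral radius of the submatrix of `A` obtained by
restricting rows and columns to the strongly connected component of `i` equals `ρ(A)`. -/
def Dominant {d : ℕ} (A : Matrix (Fin d) (Fin d) ℝ) (i : Fin d) : Prop :=
  specRad (A.submatrix (Subtype.val : {j // SameSCC A i j} → Fin d) Subtype.val) = specRad A

/-- `i` is an initial dominant index: it is dominant, and every dominant index `j` from
which `i` is reachable lies in the strongly connected component of `i`. -/
def InitialDominant {d : ℕ} (A : Matrix (Fin d) (Fin d) ℝ) (i : Fin d) : Prop :=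
  Dominant A i ∧ ∀ j : Fin d, Dominant A j → Reach A j i → SameSCC A i j

/-!
Choose `i` in the support of `v`, reachable from `j`, whose strongly connected class `C` is
downstream-most among the classes meeting the support. The zero set of `v` is closed under edges,
so no edge leaves `C` towards the support: `v|C` is a positive eigenvector of `A|C` for `ρ`, which
forces `ρ(A|C) = ρ`. If a dominant class `C'` lay strictly upstream of `C`, then `v|C'` would be
positive with `A|C' v|C' ≤ ρ v|C'`, strictly in the row where a path from `C'` to `C` leaves `C'`.
As `A|C'` is irreducible, the Collatz–Wielandt comparison of an eigenvector `w` with `v|C'` at a row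
maximising `|w_k| / v_k`, with equality propagating along edges, gives `ρ(A|C') < ρ`.
-/

section Spectrum

variable {n : Type*} [Fintype n]

theorem isRoot_charpoly_iff_exists_mulVec_eq_smul [DecidableEq n] {K : Type*} [Field K]
    (N : Matrix n n K) (μ : K) :
    N.charpoly.IsRoot μ ↔ ∃ w, w ≠ 0 ∧ N *ᵥ w = μ • w := by
  rw [← mem_spectrum_iff_isRoot_charpoly, ← spectrum_toLin',
    ← Module.End.hasEigenvalue_iff_mem_spectrum]
  constructor
  · intro h
    obtain ⟨w, hw⟩ := h.exists_hasEigenvector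
    obtain ⟨hmem, hw0⟩ := Module.End.hasEigenvector_iff.1 hw
    exact ⟨w, hw0, Module.End.mem_eigenspace_iff.1 hmem⟩
  · rintro ⟨w, hw0, hNw⟩
    exact Module.End.hasEigenvalue_of_hasEigenvector
      (Module.End.hasEigenvector_iff.2 ⟨Module.End.mem_eigenspace_iff.2 hNw, hw0⟩)

theorem isGreatest_specRad [DecidableEq n] [Nonempty n] (M : Matrix n n ℝ) :
    IsGreatest {r : ℝ | ∃ μ : ℂ, (M.map Complex.ofReal).charpoly.IsRoot μ ∧ r = ‖μ‖}
      (specRad M) := by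
  set S := {r : ℝ | ∃ μ : ℂ, (M.map Complex.ofReal).charpoly.IsRoot μ ∧ r = ‖μ‖}
  have hfin : S.Finite := by
    refine ((Polynomial.finite_setOfPred_isRoot
      (M.map Complex.ofReal).charpoly_monic.ne_zero).image (‖·‖)).subset ?_
    rintro _ ⟨μ, hμ, rfl⟩
    exact ⟨μ, hμ, rfl⟩
  obtain ⟨μ, hμ⟩ := Complex.exists_root (f := (M.map Complex.ofReal).charpoly)
    (by rw [charpoly_degree_eq_dim]; exact_mod_cast Fintype.card_pos)
  have hne : S.Nonempty := ⟨‖μ‖, μ, hμ, rfl⟩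
  exact ⟨hne.csSup_mem hfin, fun r hr => le_csSup hfin.bddAbove hr⟩

end Spectrum

section CollatzWielandt

variable {n : Type*} [Fintype n] {M : Matrix n n ℝ} {u a : n → ℝ} {r s c : ℝ}

theorem exists_tight_scaling (hu : ∀ i, 0 < u i) {k₀ : n} (hk₀ : 0 < a k₀) :
    ∃ c > 0, (∀ k, a k ≤ c * u k) ∧ ∃ k, a k = c * u k := by
  obtain ⟨k, -, hk⟩ := Finset.exists_max_image Finset.univ (fun i => a i / u i)
    ⟨k₀, Finset.mem_univ _⟩
  refine ⟨a k / u k, (div_pos hk₀ (hu k₀)).trans_le (hk k₀ (Finset.mem_univ _)),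
    fun l => (div_le_iff₀ (hu l)).1 (hk l (Finset.mem_univ _)), k, ?_⟩
  exact (div_mul_cancel₀ _ (hu k).ne').symm

theorem mulVec_le_smul_mulVec (hM : ∀ i j, 0 ≤ M i j) (hau : ∀ l, a l ≤ c * u l) (k : n) :
    (M *ᵥ a) k ≤ c * (M *ᵥ u) k := by
  simp only [mulVec, dotProduct, Finset.mul_sum]
  exact Finset.sum_le_sum fun l _ => by nlinarith [hM k l, hau l]

theorem eq_of_mulVec_eq_smul_mulVec (hM : ∀ i j, 0 ≤ M i j) (hau : ∀ l, a l ≤ c * u l) {k : n}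
    (heq : (M *ᵥ a) k = c * (M *ᵥ u) k) {l : n} (hl : 0 < M k l) : a l = c * u l := by
  simp only [mulVec, dotProduct, Finset.mul_sum] at heq
  have hterm := (Finset.sum_eq_sum_iff_of_le fun m _ =>
    (by nlinarith [hM k m, hau m] : M k m * a m ≤ c * (M k m * u m))).1 heq l
    (Finset.mem_univ l)
  exact mul_left_cancel₀ hl.ne' (by linarith)

theorem le_of_smul_le_mulVec (hM : ∀ i j, 0 ≤ M i j) (hu : ∀ i, 0 < u i) {k₀ : n}
    (hk₀ : 0 < a k₀) (hsa : ∀ i, s * a i ≤ (M *ᵥ a) i) (hMu : ∀ i, (M *ᵥ u) i ≤ r * u i) :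
    s ≤ r := by
  obtain ⟨c, hc, hau, k, hk⟩ := exists_tight_scaling hu hk₀
  refine le_of_mul_le_mul_right ?_ (mul_pos hc (hu k))
  calc s * (c * u k) = s * a k := by rw [hk]
    _ ≤ (M *ᵥ a) k := hsa k
    _ ≤ c * (M *ᵥ u) k := mulVec_le_smul_mulVec hM hau k
    _ ≤ c * (r * u k) := mul_le_mul_of_nonneg_left (hMu k) hc.le
    _ = r * (c * u k) := by ring

theorem lt_of_smul_le_mulVec (hM : ∀ i j, 0 ≤ M i j) (hu : ∀ i, 0 < u i) {k₀ : n}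
    (hk₀ : 0 < a k₀) (hsa : ∀ i, s * a i ≤ (M *ᵥ a) i) (hMu : ∀ i, (M *ᵥ u) i ≤ r * u i)
    {i₁ : n} (hlt : (M *ᵥ u) i₁ < r * u i₁)
    (hreach : ∀ k, Relation.ReflTransGen (fun p q => 0 < M p q) k i₁) : s < r := by
  refine (le_of_smul_le_mulVec hM hu hk₀ hsa hMu).lt_of_ne ?_
  rintro rfl
  obtain ⟨c, hc, hau, k₁, hk₁⟩ := exists_tight_scaling hu hk₀
  have htight : ∀ k, a k = c * u k →
      (M *ᵥ u) k = s * u k ∧ ∀ l, 0 < M k l → a l = c * u l := by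
    intro k hk
    -- the chain `c s u_k = s a_k ≤ (M a)_k ≤ c (M u)_k ≤ c s u_k` collapses to equalities
    have hlow : c * (s * u k) ≤ (M *ᵥ a) k := (hsa k).trans_eq' (by rw [hk]; ring)
    have hmid := mulVec_le_smul_mulVec hM hau k
    have hup := mul_le_mul_of_nonneg_left (hMu k) hc.le
    exact ⟨le_antisymm (hMu k) (le_of_mul_le_mul_left (by linarith) hc),
      fun l hl => eq_of_mulVec_eq_smul_mulVec hM hau (by linarith) hl⟩
  have hpropagate : ∀ x y, Relation.ReflTransGen (fun p q => 0 < M p q) x y →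
      a x = c * u x → a y = c * u y := by
    intro x y hxy hx
    induction hxy with
    | refl => exact hx
    | tail _ hedge ih => exact (htight _ ih).2 _ hedge
  exact hlt.ne (htight i₁ (hpropagate k₁ i₁ (hreach k₁) hk₁)).1

theorem exists_norm_smul_le_mulVec [DecidableEq n] (hM : ∀ i j, 0 ≤ M i j) {μ : ℂ}
    (hμ : (M.map Complex.ofReal).charpoly.IsRoot μ) :
    ∃ a : n → ℝ, ∃ k₀, 0 < a k₀ ∧ ∀ i, ‖μ‖ * a i ≤ (M *ᵥ a) i := by
  obtain ⟨w, hw, hwμ⟩ := (isRoot_charpoly_iff_exists_mulVec_eq_smul _ _).1 hμ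
  obtain ⟨k₀, hk₀⟩ := Function.ne_iff.1 hw
  refine ⟨fun l => ‖w l‖, k₀, norm_pos_iff.2 hk₀, fun i => ?_⟩
  calc ‖μ‖ * ‖w i‖ = ‖∑ l, (M i l : ℂ) * w l‖ := by
        rw [← norm_mul, ← smul_eq_mul, ← Pi.smul_apply, ← hwμ]; rfl
    _ ≤ ∑ l, ‖(M i l : ℂ) * w l‖ := norm_sum_le _ _
    _ = (M *ᵥ fun l => ‖w l‖) i := Finset.sum_congr rfl fun l _ => by
        rw [norm_mul, Complex.norm_real, Real.norm_of_nonneg (hM i l)]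

theorem specRad_eq_of_mulVec_eq_smul [DecidableEq n] [Nonempty n] (hM : ∀ i j, 0 ≤ M i j)
    (hu : ∀ i, 0 < u i) (hMu : M *ᵥ u = r • u) : specRad M = r := by
  have hMu' : ∀ i, (M *ᵥ u) i = r * u i := fun i => by rw [hMu]; rfl
  obtain ⟨i₀⟩ := ‹Nonempty n›
  have hr : 0 ≤ r := by
    refine nonneg_of_mul_nonneg_left ?_ (hu i₀)
    rw [← hMu']
    exact Finset.sum_nonneg fun l _ => mul_nonneg (hM i₀ l) (hu l).le
  have hroot : (M.map Complex.ofReal).charpoly.IsRoot r := by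
    refine (isRoot_charpoly_iff_exists_mulVec_eq_smul _ _).2
      ⟨fun i => u i, fun h => (hu i₀).ne' (by simpa using congrFun h i₀), funext fun i => ?_⟩
    have hcast : ((M *ᵥ u) i : ℂ) = (M.map Complex.ofReal *ᵥ fun l => (u l : ℂ)) i :=
      RingHom.map_mulVec Complex.ofRealHom M u i
    simp [← hcast, hMu']
  refine (isGreatest_specRad M).unique ⟨⟨r, hroot, by simp [abs_of_nonneg hr]⟩, ?_⟩
  rintro _ ⟨μ, hμ, rfl⟩
  obtain ⟨a, k₀, hk₀, ha⟩ := exists_norm_smul_le_mulVec hM hμ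
  exact le_of_smul_le_mulVec hM hu hk₀ ha fun i => (hMu' i).le

theorem specRad_lt_of_mulVec_le [DecidableEq n] [Nonempty n] (hM : ∀ i j, 0 ≤ M i j)
    (hu : ∀ i, 0 < u i) (hMu : ∀ i, (M *ᵥ u) i ≤ r * u i) {i₁ : n}
    (hlt : (M *ᵥ u) i₁ < r * u i₁)
    (hreach : ∀ k, Relation.ReflTransGen (fun p q => 0 < M p q) k i₁) : specRad M < r := by
  obtain ⟨μ, hμ, hμeq⟩ := (isGreatest_specRad M).1
  obtain ⟨a, k₀, hk₀, ha⟩ := exists_norm_smul_le_mulVec hM hμ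
  exact hμeq ▸ lt_of_smul_le_mulVec hM hu hk₀ ha hMu hlt hreach

end CollatzWielandt

namespace Relation.ReflTransGen

variable {α : Type*} {R : α → α → Prop}

theorem exists_maximal [Finite α] {P : α → Prop} {j : α} (hj : P j) :
    ∃ i, P i ∧ ReflTransGen R j i ∧ ∀ k, P k → ReflTransGen R i k → ReflTransGen R k i := by
  set ancestors : α → Set α := fun i => {x | ReflTransGen R x i}
  have hanc : ∀ {a b}, ReflTransGen R a b ↔ ancestors a ⊆ ancestors b :=
    ⟨fun hab _ hx => hx.trans hab, fun h => h ReflTransGen.refl⟩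
  obtain ⟨i, ⟨hPi, hji⟩, hmax⟩ := Set.Finite.exists_maximalFor ancestors
    {i | P i ∧ ReflTransGen R j i} (Set.toFinite _) ⟨j, hj, ReflTransGen.refl⟩
  exact ⟨i, hPi, hji, fun k hPk hik => hanc.2 (hmax ⟨hPk, hji.trans hik⟩ (hanc.1 hik))⟩

theorem exists_exit {P : α → Prop} {a b : α} (hab : ReflTransGen R a b) (ha : P a)
    (hb : ¬P b) : ∃ x y, P x ∧ ¬P y ∧ R x y ∧ ReflTransGen R y b := by
  induction hab using ReflTransGen.head_induction_on with
  | refl => exact absurd ha hb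
  | @head x y hxy hyb ih =>
    by_cases hy : P y
    · exact ih hy
    · exact ⟨x, y, ha, hy, hxy, hyb⟩

end Relation.ReflTransGen

section StronglyConnected

variable {d : ℕ} {A : Matrix (Fin d) (Fin d) ℝ}

theorem reflTransGen_submatrix_sameSCC (j : Fin d) (a b : {x // SameSCC A j x}) :
    Relation.ReflTransGen (fun p q => 0 < A.submatrix Subtype.val Subtype.val p q) a b := by
  suffices h : ∀ x (hjx : Reach A j x) (hxb : Reach A x b),
      Relation.ReflTransGen (fun p q => 0 < A.submatrix Subtype.val Subtype.val p q)
        ⟨x, hjx, hxb.trans b.2.2⟩ b from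
    h a a.2.1 (a.2.2.trans b.2.1)
  intro x hjx hxb
  induction hxb using Relation.ReflTransGen.head_induction_on with
  | refl => exact Relation.ReflTransGen.refl
  | @head x y hxy hyb ih =>
    have hedge : 0 < A.submatrix Subtype.val Subtype.val
        (⟨x, hjx, (show Reach A x b from .head hxy hyb).trans b.2.2⟩ : {x // SameSCC A j x})
        (⟨y, hjx.tail hxy, hyb.trans b.2.2⟩ : {x // SameSCC A j x}) := hxy
    exact .head hedge (ih (hjx.tail hxy))

theorem mulVec_apply_eq_submatrix_mulVec_add {ι R : Type*} [Fintype ι]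
    [NonUnitalNonAssocSemiring R] (M : Matrix ι ι R) (v : ι → R) (p : ι → Prop)
    [DecidablePred p] [Fintype {i // p i}] (k : {i // p i}) :
    (M *ᵥ v) k = (M.submatrix Subtype.val Subtype.val *ᵥ fun m : {i // p i} => v m) k +
      ∑ m ∈ Finset.univ.filter (fun m => ¬p m), M k m * v m := by
  rw [mulVec, dotProduct, ← Finset.sum_filter_add_sum_filter_not Finset.univ p]
  congr 1
  exact Finset.sum_subtype _ (by simp) (fun m : ι => M k m * v m)

variable {ρ : ℝ} {v : Fin d → ℝ}

theorem ne_zero_of_reach (hA : ∀ s t, 0 ≤ A s t) (hv : ∀ i, 0 ≤ v i)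
    (heig : A *ᵥ v = ρ • v) {s t : Fin d} (hst : Reach A s t) (ht : v t ≠ 0) : v s ≠ 0 := by
  have hedge : ∀ x y, 0 < A x y → v x = 0 → v y = 0 := by
    intro x y hxy hx
    have hsum : ∑ m, A x m * v m = 0 := by
      rw [← dotProduct, ← mulVec, heig, Pi.smul_apply, hx, smul_zero]
    have := (Finset.sum_eq_zero_iff_of_nonneg fun m _ => mul_nonneg (hA x m) (hv m)).1 hsum y
      (Finset.mem_univ y)
    exact (mul_eq_zero.1 this).resolve_left hxy.ne'
  intro hs
  induction hst with
  | refl => exact ht hs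
  | tail _ hxy ih => exact ih fun hx => ht (hedge _ _ hxy hx)

theorem dominant_of_forall_reach (hA : ∀ s t, 0 ≤ A s t) (hv : ∀ i, 0 ≤ v i)
    (hρ : ρ = specRad A) (heig : A *ᵥ v = ρ • v) {i : Fin d} (hvi : v i ≠ 0)
    (hfinal : ∀ k, v k ≠ 0 → Reach A i k → Reach A k i) : Dominant A i := by
  classical
  have : Nonempty {k // SameSCC A i k} := ⟨⟨i, .refl, .refl⟩⟩
  rw [Dominant, ← hρ]
  refine specRad_eq_of_mulVec_eq_smul (fun _ _ => hA _ _)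
    (fun k => (hv k).lt_of_ne' (ne_zero_of_reach hA hv heig k.2.2 hvi)) (funext fun k => ?_)
  have hrow : (A *ᵥ v) k = ρ * v k := by rw [heig]; rfl
  rw [Pi.smul_apply, smul_eq_mul, ← hrow, mulVec_apply_eq_submatrix_mulVec_add A v (SameSCC A i),
    left_eq_add]
  refine Finset.sum_eq_zero fun m hm => ?_
  by_contra hkm
  obtain ⟨hAkm, hvm⟩ := mul_ne_zero_iff.1 hkm
  have him : Reach A i m := k.2.1.tail ((hA _ _).lt_of_ne' hAkm)
  exact (Finset.mem_filter.1 hm).2 ⟨him, hfinal m hvm him⟩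

open Classical in
theorem specRad_submatrix_sameSCC_lt (hA : ∀ s t, 0 ≤ A s t) (hv : ∀ i, 0 ≤ v i)
    (heig : A *ᵥ v = ρ • v) {i j : Fin d} (hvi : v i ≠ 0) (hji : Reach A j i)
    (hij : ¬Reach A i j) :
    specRad (A.submatrix (Subtype.val : {k // SameSCC A j k} → Fin d) Subtype.val) < ρ := by
  have : Nonempty {k // SameSCC A j k} := ⟨⟨j, .refl, .refl⟩⟩
  have hrow (k : {k // SameSCC A j k}) : ρ * v k = (A.submatrix Subtype.val Subtype.val *ᵥ
      fun m : {k // SameSCC A j k} => v m) k +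
        ∑ m ∈ Finset.univ.filter (fun m => ¬SameSCC A j m), A k m * v m := by
    rw [← mulVec_apply_eq_submatrix_mulVec_add, heig]
    rfl
  have hrest (k : Fin d) : 0 ≤ ∑ m ∈ Finset.univ.filter (fun m => ¬SameSCC A j m), A k m * v m :=
    Finset.sum_nonneg fun m _ => mul_nonneg (hA k m) (hv m)
  obtain ⟨k₁, l₁, hk₁, hl₁, hedge, hl₁i⟩ :=
    hji.exists_exit (P := SameSCC A j) ⟨.refl, .refl⟩ fun h => hij h.2
  have hexit : 0 < ∑ m ∈ Finset.univ.filter (fun m => ¬SameSCC A j m), A k₁ m * v m :=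
    (mul_pos hedge ((hv l₁).lt_of_ne' (ne_zero_of_reach hA hv heig hl₁i hvi))).trans_le
      (Finset.single_le_sum (fun m _ => mul_nonneg (hA k₁ m) (hv m))
        (Finset.mem_filter.2 ⟨Finset.mem_univ l₁, hl₁⟩))
  refine specRad_lt_of_mulVec_le (fun _ _ => hA _ _)
    (fun k => (hv k).lt_of_ne' (ne_zero_of_reach hA hv heig (k.2.2.trans hji) hvi))
    (fun k => ?_) (i₁ := ⟨k₁, hk₁⟩) ?_ (fun k => reflTransGen_submatrix_sameSCC j k _)
  · linarith [hrow k, hrest k]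
  · linarith [hrow ⟨k₁, hk₁⟩]

end StronglyConnected

theorem stmt14_general {d : ℕ} (A : Matrix (Fin d) (Fin d) ℝ)
    (hA : ∀ s t, 0 ≤ A s t)
    (ρ : ℝ) (hρ : ρ = specRad A)
    (v : Fin d → ℝ) (hv : ∀ i, 0 ≤ v i)
    (heig : A.mulVec v = ρ • v) :
    ∀ j : Fin d, v j ≠ 0 → ∃ i : Fin d, InitialDominant A i ∧ Reach A j i := by
  intro j hj
  obtain ⟨i, hvi, hji, hfinal⟩ := Relation.ReflTransGen.exists_maximal (P := (v · ≠ 0)) hj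
  refine ⟨i, ⟨dominant_of_forall_reach hA hv hρ heig hvi hfinal, fun j' hj' hj'i => ?_⟩, hji⟩
  by_contra hij'
  exact (specRad_submatrix_sameSCC_lt hA hv heig hvi hj'i fun h => hij' ⟨h, hj'i⟩).ne
    (hj'.trans hρ.symm)

/-- a nonnegative eigenvector of a nonnegative matrix `A` for the eigenvalue
`ρ = ρ(A) > 0` is supported on the backward closure of the initial dominant components. -/
theorem stmt14 {d : ℕ} (A : Matrix (Fin d) (Fin d) ℝ)
    (hA : ∀ s t, 0 ≤ A s t)
    (ρ : ℝ) (hρ : ρ = specRad A) (hρpos : 0 < ρ)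
    (v : Fin d → ℝ) (hv : ∀ i, 0 ≤ v i)
    (heig : A.mulVec v = ρ • v) :
    ∀ j : Fin d, v j ≠ 0 → ∃ i : Fin d, InitialDominant A i ∧ Reach A j i :=
  stmt14_general A hA ρ hρ v hv heig
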